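/- Let A : Z≥1³ → C satisfy: (i) A(1,1,1) = 1; (ii) A(m1 m1', m2 m2', m3 m3') = A(m1,m2,m3)·A(m1',m2',m3') whenever gcd(m1 m2 m3, m1' m2' m3') = 1; and (iii) there exist constants C and ε > 0 with |A(k,1,1)| ≤ C k^{1/2+ε} and |A(1,l,n)| ≤ C (ln)^{1/2+ε} for all k, l, n ≥ 1. Suppose further A satisfies the Chandee–Li inversion formula A(k,l,n) = Σ_{d | gcd(k,l)} Σ_{e | gcd(d, k/d)} Σ_{f | gcd(k,n)} μ(d) μ(e) A(k/(def), 1, 1) · A(1, l/d, dn/(ef)) (with terms interpreted as zero when the arguments are not positive integers). Then for every ε' > ε there is a constant C' with |A(k,l,n)| ≤ C' (kln)^{1/2+ε'} for all positive integers k, l, n. -/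

import Mathlib

open ArithmeticFunction

section AuxDivisorBound
open Finset

lemma small_prime_bound (δ : ℝ) (hδ : 0 < δ) (p a : ℕ) (hp : 2 ≤ p) :
    (a + 1 : ℝ) ≤ (1 + 4 / δ) * (p : ℝ) ^ ((a : ℝ) * δ) := by
  have h2 : (2 : ℝ) ^ ((a : ℝ) * δ) ≤ (p : ℝ) ^ ((a : ℝ) * δ) := by
    apply Real.rpow_le_rpow (by norm_num) (by exact_mod_cast hp)
    positivity
  have hexp : (1 : ℝ) + (a : ℝ) * δ * Real.log 2 ≤ (2 : ℝ) ^ ((a : ℝ) * δ) := by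
    rw [Real.rpow_def_of_pos (by norm_num), mul_comm (Real.log 2)]
    have := Real.add_one_le_exp ((a : ℝ) * δ * Real.log 2)
    linarith [this]
  have hlog : (1:ℝ)/2 ≤ Real.log 2 := by
    have := Real.log_two_gt_d9
    linarith
  have ha : (0:ℝ) ≤ a := Nat.cast_nonneg a
  have key : (a + 1 : ℝ) ≤ (1 + 4 / δ) * ((1 : ℝ) + (a : ℝ) * δ * Real.log 2) := by
    have h4 : (0:ℝ) < 4 / δ := by positivity
    have hδ' := hδ.le
    have hal : (a:ℝ) * δ * (1/2) ≤ (a:ℝ) * δ * Real.log 2 :=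
      mul_le_mul_of_nonneg_left hlog (by positivity)
    have hexpand : (1 + 4 / δ) * ((1 : ℝ) + (a : ℝ) * δ * (1/2))
        = 1 + (a:ℝ)*δ*(1/2) + 4/δ + (4/δ) * ((a:ℝ)*δ*(1/2)) := by ring
    have hsimp : (4/δ) * ((a:ℝ)*δ*(1/2)) = 2 * a := by field_simp; ring
    nlinarith [mul_le_mul_of_nonneg_left hal (le_of_lt (by positivity : (0:ℝ) < 1 + 4/δ)),
      mul_nonneg ha hδ']
  calc (a + 1 : ℝ) ≤ (1 + 4 / δ) * ((1 : ℝ) + (a : ℝ) * δ * Real.log 2) := key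
    _ ≤ (1 + 4 / δ) * (2 : ℝ) ^ ((a : ℝ) * δ) :=
        mul_le_mul_of_nonneg_left hexp (by positivity)
    _ ≤ (1 + 4 / δ) * (p : ℝ) ^ ((a : ℝ) * δ) :=
        mul_le_mul_of_nonneg_left h2 (by positivity)

lemma large_prime_bound (δ : ℝ) (p a : ℕ) (hp : 0 < p)
    (h2 : (2 : ℝ) ≤ (p : ℝ) ^ δ) :
    (a + 1 : ℝ) ≤ (p : ℝ) ^ ((a : ℝ) * δ) := by
  have hppos : (0:ℝ) < (p:ℝ) := by exact_mod_cast hp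
  have h1 : (p : ℝ) ^ ((a : ℝ) * δ) = ((p : ℝ) ^ δ) ^ a := by
    rw [mul_comm, Real.rpow_mul hppos.le, Real.rpow_natCast]
  rw [h1]
  have h2a : ((2:ℝ)) ^ a ≤ ((p : ℝ) ^ δ) ^ a := pow_le_pow_left₀ (by norm_num) h2 a
  have h3 : (a + 1 : ℝ) ≤ (2:ℝ) ^ a := by
    have h4 : (a + 1 : ℕ) ≤ 2 ^ a := Nat.lt_two_pow_self
    exact_mod_cast h4
  linarith

/-- Divisor bound: for every `δ > 0` there is `K ≥ 1` with `τ(n) ≤ K n^δ`. -/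
lemma tau_rpow_bound (δ : ℝ) (hδ : 0 < δ) :
    ∃ K : ℝ, 1 ≤ K ∧ ∀ n : ℕ, 0 < n → (n.divisors.card : ℝ) ≤ K * (n : ℝ) ^ δ := by
  set c : ℝ := 1 + 4 / δ with hc
  have h4δ : (0:ℝ) < 4 / δ := by positivity
  have hc1 : (1:ℝ) ≤ c := by rw [hc]; linarith
  set B : ℕ := ⌈(2:ℝ) ^ (1/δ)⌉₊ + 1 with hB
  refine ⟨c ^ B, one_le_pow₀ hc1, ?_⟩
  intro n hn
  have hn0 : n ≠ 0 := hn.ne'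
  rw [Nat.card_divisors hn0]
  have hfact : ∏ p ∈ n.primeFactors, (p : ℝ) ^ ((n.factorization p : ℝ) * δ)
      = (n : ℝ) ^ δ := by
    have h1 : ∀ p ∈ n.primeFactors, (p : ℝ) ^ ((n.factorization p : ℝ) * δ)
        = ((p ^ n.factorization p : ℕ) : ℝ) ^ δ := by
      intro p hp
      push_cast
      rw [← Real.rpow_natCast ((p:ℝ)) (n.factorization p), ← Real.rpow_mul (Nat.cast_nonneg p)]
    rw [Finset.prod_congr rfl h1, Real.finset_prod_rpow _ _ (fun p _ => by positivity) δ]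
    congr 1
    rw [← Nat.cast_prod]
    congr 1
    have := Nat.factorization_prod_pow_eq_self hn0
    simpa [Finsupp.prod] using this
  -- pointwise bound
  have hpoint : ∀ p ∈ n.primeFactors, ((n.factorization p + 1 : ℕ) : ℝ)
      ≤ (if p < B then c else 1) * (p : ℝ) ^ ((n.factorization p : ℝ) * δ) := by
    intro p hp
    have hp2 : 2 ≤ p := (Nat.prime_of_mem_primeFactors hp).two_le
    push_cast
    by_cases hpB : p < B
    · simp only [hpB, if_true]
      exact small_prime_bound δ hδ p _ hp2
    · simp only [hpB, if_false, one_mul]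
      apply large_prime_bound δ p _ (by omega)
      -- p ≥ B > 2^{1/δ}
      have hpB' : ((2:ℝ) ^ (1/δ)) ≤ (p : ℝ) := by
        have h1 : (⌈(2:ℝ) ^ (1/δ)⌉₊ : ℝ) ≥ (2:ℝ) ^ (1/δ) := Nat.le_ceil _
        have h2 : B ≤ p := not_lt.mp hpB
        have : (B : ℝ) ≤ (p : ℝ) := by exact_mod_cast h2
        have hBge : ((⌈(2:ℝ) ^ (1/δ)⌉₊ : ℕ) : ℝ) ≤ (B : ℝ) := by
          rw [hB]; push_cast; linarith
        linarith
      calc (2:ℝ) = ((2:ℝ) ^ (1/δ)) ^ δ := by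
            rw [← Real.rpow_mul (by norm_num : (0:ℝ) ≤ 2), one_div,
              inv_mul_cancel₀ hδ.ne', Real.rpow_one]
          _ ≤ (p : ℝ) ^ δ := Real.rpow_le_rpow (by positivity) hpB' hδ.le
  have hprodle : ((∏ p ∈ n.primeFactors, (n.factorization p + 1) : ℕ) : ℝ)
      ≤ ∏ p ∈ n.primeFactors,
          ((if p < B then c else 1) * (p : ℝ) ^ ((n.factorization p : ℝ) * δ)) := by
    push_cast
    apply Finset.prod_le_prod
    · intro p _; positivity
    · intro p hp
      have := hpoint p hp
      push_cast at this ⊢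
      exact this
  have hsplit : ∏ p ∈ n.primeFactors,
        ((if p < B then c else 1) * (p : ℝ) ^ ((n.factorization p : ℝ) * δ))
      = (∏ p ∈ n.primeFactors, (if p < B then c else 1)) *
        (∏ p ∈ n.primeFactors, (p : ℝ) ^ ((n.factorization p : ℝ) * δ)) :=
    Finset.prod_mul_distrib
  have hite : (∏ p ∈ n.primeFactors, (if p < B then c else 1))
      = c ^ ((n.primeFactors.filter (· < B)).card) := by
    rw [Finset.prod_ite, Finset.prod_const, Finset.prod_const, one_pow, mul_one]
  have hcard : (n.primeFactors.filter (· < B)).card ≤ B := by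
    calc (n.primeFactors.filter (· < B)).card
        ≤ (Finset.range B).card := Finset.card_le_card (by
          intro p hp
          simp only [Finset.mem_filter] at hp
          exact Finset.mem_range.mpr hp.2)
      _ = B := Finset.card_range B
  have hcpow : c ^ ((n.primeFactors.filter (· < B)).card) ≤ c ^ B :=
    pow_le_pow_right₀ hc1 hcard
  calc ((∏ p ∈ n.primeFactors, (n.factorization p + 1) : ℕ) : ℝ)
      ≤ (∏ p ∈ n.primeFactors, (if p < B then c else 1)) *
        (∏ p ∈ n.primeFactors, (p : ℝ) ^ ((n.factorization p : ℝ) * δ)) := by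
        rw [← hsplit]; exact hprodle
    _ ≤ c ^ B * (n : ℝ) ^ δ := by
        rw [hfact, hite]
        exact mul_le_mul_of_nonneg_right hcpow (by positivity)

end AuxDivisorBound

/-- Ramanujan on average (Chandee–Li): GL(4) Fourier coefficients that are
multiplicative, satisfy the bounds `|A(k,1,1)| ≤ C k^{1/2+ε}` and
`|A(1,l,n)| ≤ C (ln)^{1/2+ε}`, and satisfy the Chandee–Li inversion formula, obey
`|A(k,l,n)| ≪ (kln)^{1/2+ε'}` for every `ε' > ε`. -/
theorem ramanujan_on_average
    (A : ℕ → ℕ → ℕ → ℂ)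
    (hA1 : A 1 1 1 = 1)
    (hmul : ∀ m1 m2 m3 m1' m2' m3' : ℕ,
      0 < m1 → 0 < m2 → 0 < m3 → 0 < m1' → 0 < m2' → 0 < m3' →
      Nat.gcd (m1 * m2 * m3) (m1' * m2' * m3') = 1 →
      A (m1 * m1') (m2 * m2') (m3 * m3') = A m1 m2 m3 * A m1' m2' m3')
    (C ε : ℝ) (hε : 0 < ε)
    (hb1 : ∀ k : ℕ, 0 < k → ‖A k 1 1‖ ≤ C * (k : ℝ) ^ ((1 : ℝ) / 2 + ε))
    (hb2 : ∀ l n : ℕ, 0 < l → 0 < n →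
      ‖A 1 l n‖ ≤ C * ((l * n : ℕ) : ℝ) ^ ((1 : ℝ) / 2 + ε))
    (hinv : ∀ k l n : ℕ, 0 < k → 0 < l → 0 < n →
      A k l n =
        ∑ d ∈ (Nat.gcd k l).divisors, ∑ e ∈ (Nat.gcd d (k / d)).divisors,
          ∑ f ∈ (Nat.gcd k n).divisors,
            ((moebius d : ℤ) : ℂ) * ((moebius e : ℤ) : ℂ) *
              (if d * e * f ∣ k ∧ e * f ∣ d * n then
                A (k / (d * e * f)) 1 1 * A 1 (l / d) (d * n / (e * f))
              else 0)) :
    ∀ ε' : ℝ, ε < ε' → ∃ C' : ℝ, ∀ k l n : ℕ, 0 < k → 0 < l → 0 < n →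
      ‖A k l n‖ ≤ C' * ((k * l * n : ℕ) : ℝ) ^ ((1 : ℝ) / 2 + ε') := by
  intro ε' hε'
  set s : ℝ := (1:ℝ)/2 + ε with hs
  have hs0 : 0 < s := by rw [hs]; linarith
  set δ : ℝ := (ε' - ε)/3 with hδdef
  have hδ : 0 < δ := by rw [hδdef]; linarith
  obtain ⟨K, hK1, hK⟩ := tau_rpow_bound δ hδ
  have hC1 : (1:ℝ) ≤ C := by
    have h := hb1 1 one_pos
    simpa [hA1, Real.one_rpow] using h
  have hC0 : (0:ℝ) < C := by linarith
  refine ⟨C^2 * K^3, ?_⟩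
  intro k l n hk hl hn
  have hk0 : k ≠ 0 := hk.ne'
  have hkln : 0 < k * l * n := by positivity
  set T : ℝ := C^2 * ((k * l * n : ℕ) : ℝ) ^ s with hT
  have hT0 : 0 ≤ T := by
    rw [hT]; positivity
  have habsmu : ∀ m : ℕ, ‖((moebius m : ℤ) : ℂ)‖ ≤ 1 := by
    intro m
    rw [Complex.norm_intCast]
    exact_mod_cast (abs_moebius_le_one (n := m))
  -- term bound
  have hterm : ∀ d ∈ (Nat.gcd k l).divisors, ∀ e ∈ (Nat.gcd d (k / d)).divisors,
      ∀ f ∈ (Nat.gcd k n).divisors,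
      ‖((moebius d : ℤ) : ℂ) * ((moebius e : ℤ) : ℂ) *
        (if d * e * f ∣ k ∧ e * f ∣ d * n then
          A (k / (d * e * f)) 1 1 * A 1 (l / d) (d * n / (e * f)) else 0)‖ ≤ T := by
    intro d hd e he f hf
    have hdpos : 0 < d := Nat.pos_of_mem_divisors hd
    have hepos : 0 < e := Nat.pos_of_mem_divisors he
    have hfpos : 0 < f := Nat.pos_of_mem_divisors hf
    have hdl : d ∣ l := (Nat.dvd_gcd_iff.mp (Nat.mem_divisors.mp hd).1).2
    rw [norm_mul, norm_mul]
    by_cases hcond : d * e * f ∣ k ∧ e * f ∣ d * n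
    · rw [if_pos hcond]
      obtain ⟨hdef, hef⟩ := hcond
      have hk1 : 0 < k / (d * e * f) :=
        Nat.div_pos (Nat.le_of_dvd hk hdef) (by positivity)
      have hl1 : 0 < l / d := Nat.div_pos (Nat.le_of_dvd hl hdl) hdpos
      have hn1 : 0 < d * n / (e * f) :=
        Nat.div_pos (Nat.le_of_dvd (by positivity) hef) (by positivity)
      have hA1b := hb1 (k / (d * e * f)) hk1
      have hA2b := hb2 (l / d) (d * n / (e * f)) hl1 hn1
      have hkle : (↑(k / (d * e * f)) : ℝ) ^ s ≤ (k : ℝ) ^ s :=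
        Real.rpow_le_rpow (Nat.cast_nonneg _)
          (by exact_mod_cast Nat.div_le_self k (d*e*f)) hs0.le
      have hln_nat : (l / d) * (d * n / (e * f)) ≤ l * n := by
        rw [Nat.div_mul_div_comm hdl hef]
        calc l * (d * n) / (d * (e * f)) ≤ l * (d * n) / d :=
              Nat.div_le_div_left (Nat.le_mul_of_pos_right d (by positivity)) hdpos
          _ = l * n := by
              rw [Nat.mul_div_assoc l (dvd_mul_right d n), Nat.mul_div_cancel_left n hdpos]
      have hlnle : (↑((l / d) * (d * n / (e * f))) : ℝ) ^ s ≤ ((l * n : ℕ) : ℝ) ^ s :=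
        Real.rpow_le_rpow (Nat.cast_nonneg _) (by exact_mod_cast hln_nat) hs0.le
      have hmu1 := habsmu d
      have hmu2 := habsmu e
      have habs1 : (0:ℝ) ≤ ‖A (k / (d * e * f)) 1 1‖ := norm_nonneg _
      have habs2 : (0:ℝ) ≤ ‖A 1 (l / d) (d * n / (e * f))‖ := norm_nonneg _
      have hprod : ‖A (k / (d * e * f)) 1 1 * A 1 (l / d) (d * n / (e * f))‖
          ≤ (C * (k : ℝ) ^ s) * (C * ((l * n : ℕ) : ℝ) ^ s) := by
        rw [norm_mul]
        apply mul_le_mul (le_trans hA1b ?_) (le_trans hA2b ?_) habs2 (by positivity)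
        · exact mul_le_mul_of_nonneg_left hkle hC0.le
        · exact mul_le_mul_of_nonneg_left hlnle hC0.le
      have hfinal : (C * (k : ℝ) ^ s) * (C * ((l * n : ℕ) : ℝ) ^ s) = T := by
        rw [hT]
        have hx : ((k * l * n : ℕ) : ℝ) ^ s = (k : ℝ) ^ s * ((l * n : ℕ) : ℝ) ^ s := by
          push_cast
          rw [mul_assoc, Real.mul_rpow (by positivity) (by positivity)]
        rw [hx]; ring
      calc ‖((moebius d : ℤ) : ℂ)‖ * ‖((moebius e : ℤ) : ℂ)‖ *
            ‖A (k / (d * e * f)) 1 1 * A 1 (l / d) (d * n / (e * f))‖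
          ≤ 1 * 1 * ((C * (k : ℝ) ^ s) * (C * ((l * n : ℕ) : ℝ) ^ s)) := by
            apply mul_le_mul (mul_le_mul hmu1 hmu2 (norm_nonneg _) zero_le_one)
              hprod (norm_nonneg _)
            norm_num
        _ = T := by rw [one_mul, one_mul, hfinal]
    · rw [if_neg hcond]
      simpa using hT0
  -- card bounds
  set τk : ℝ := (k.divisors.card : ℝ) with hτ
  have hτ0 : 0 ≤ τk := Nat.cast_nonneg _
  have hcard1 : ((Nat.gcd k l).divisors.card : ℝ) ≤ τk := by
    rw [hτ]
    exact_mod_cast Finset.card_le_card (Nat.divisors_subset_of_dvd hk0 (Nat.gcd_dvd_left k l))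
  have hcard3 : ((Nat.gcd k n).divisors.card : ℝ) ≤ τk := by
    rw [hτ]
    exact_mod_cast Finset.card_le_card (Nat.divisors_subset_of_dvd hk0 (Nat.gcd_dvd_left k n))
  have hcard2 : ∀ d ∈ (Nat.gcd k l).divisors, ((Nat.gcd d (k / d)).divisors.card : ℝ) ≤ τk := by
    intro d hd
    have hdk : d ∣ k := (Nat.mem_divisors.mp hd).1.trans (Nat.gcd_dvd_left k l)
    have : Nat.gcd d (k / d) ∣ k := (Nat.gcd_dvd_left d (k/d)).trans hdk
    rw [hτ]
    exact_mod_cast Finset.card_le_card (Nat.divisors_subset_of_dvd hk0 this)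
  -- sum bound
  have hsum : ‖A k l n‖ ≤ τk * (τk * (τk * T)) := by
    rw [hinv k l n hk hl hn]
    have step1 : ∀ d ∈ (Nat.gcd k l).divisors, ∀ e ∈ (Nat.gcd d (k / d)).divisors,
        ‖∑ f ∈ (Nat.gcd k n).divisors,
          ((moebius d : ℤ) : ℂ) * ((moebius e : ℤ) : ℂ) *
            (if d * e * f ∣ k ∧ e * f ∣ d * n then
              A (k / (d * e * f)) 1 1 * A 1 (l / d) (d * n / (e * f)) else 0)‖ ≤ τk * T := by
      intro d hd e he
      calc ‖_‖ ≤ ∑ f ∈ (Nat.gcd k n).divisors, 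
            ‖((moebius d : ℤ) : ℂ) * ((moebius e : ℤ) : ℂ) *
            (if d * e * f ∣ k ∧ e * f ∣ d * n then
              A (k / (d * e * f)) 1 1 * A 1 (l / d) (d * n / (e * f)) else 0)‖ :=
            norm_sum_le _ _
        _ ≤ (Nat.gcd k n).divisors.card • T :=
            Finset.sum_le_card_nsmul _ _ T (fun f hf => hterm d hd e he f hf)
        _ = ((Nat.gcd k n).divisors.card : ℝ) * T := nsmul_eq_mul _ _
        _ ≤ τk * T := mul_le_mul_of_nonneg_right hcard3 hT0
    have step2 : ∀ d ∈ (Nat.gcd k l).divisors,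
        ‖∑ e ∈ (Nat.gcd d (k / d)).divisors,
          ∑ f ∈ (Nat.gcd k n).divisors,
          ((moebius d : ℤ) : ℂ) * ((moebius e : ℤ) : ℂ) *
            (if d * e * f ∣ k ∧ e * f ∣ d * n then
              A (k / (d * e * f)) 1 1 * A 1 (l / d) (d * n / (e * f)) else 0)‖ ≤ τk * (τk * T) := by
      intro d hd
      calc ‖_‖ ≤ ∑ e ∈ (Nat.gcd d (k / d)).divisors, 
            ‖∑ f ∈ (Nat.gcd k n).divisors,
            ((moebius d : ℤ) : ℂ) * ((moebius e : ℤ) : ℂ) *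
            (if d * e * f ∣ k ∧ e * f ∣ d * n then
              A (k / (d * e * f)) 1 1 * A 1 (l / d) (d * n / (e * f)) else 0)‖ :=
            norm_sum_le _ _
        _ ≤ (Nat.gcd d (k / d)).divisors.card • (τk * T) :=
            Finset.sum_le_card_nsmul _ _ (τk * T) (fun e he => step1 d hd e he)
        _ = ((Nat.gcd d (k / d)).divisors.card : ℝ) * (τk * T) := nsmul_eq_mul _ _
        _ ≤ τk * (τk * T) := mul_le_mul_of_nonneg_right (hcard2 d hd)
            (mul_nonneg hτ0 hT0)
    calc ‖_‖ ≤ ∑ d ∈ (Nat.gcd k l).divisors, 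
          ‖∑ e ∈ (Nat.gcd d (k / d)).divisors, ∑ f ∈ (Nat.gcd k n).divisors,
          ((moebius d : ℤ) : ℂ) * ((moebius e : ℤ) : ℂ) *
          (if d * e * f ∣ k ∧ e * f ∣ d * n then
            A (k / (d * e * f)) 1 1 * A 1 (l / d) (d * n / (e * f)) else 0)‖ :=
          norm_sum_le _ _
      _ ≤ (Nat.gcd k l).divisors.card • (τk * (τk * T)) :=
          Finset.sum_le_card_nsmul _ _ _ step2
      _ = ((Nat.gcd k l).divisors.card : ℝ) * (τk * (τk * T)) := nsmul_eq_mul _ _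
      _ ≤ τk * (τk * (τk * T)) := mul_le_mul_of_nonneg_right hcard1
          (mul_nonneg hτ0 (mul_nonneg hτ0 hT0))
  -- final estimate
  have hτK : τk ≤ K * (k : ℝ) ^ δ := hK k hk
  have hkpos : (0:ℝ) < (k:ℝ) := by exact_mod_cast hk
  have hklnpos : (0:ℝ) < ((k * l * n : ℕ) : ℝ) := by exact_mod_cast hkln
  have hkd0 : (0:ℝ) ≤ K * (k : ℝ) ^ δ := by positivity
  have hτcube : τk * (τk * τk) ≤ K^3 * (k : ℝ) ^ (ε' - ε) := by
    have h12 : τk * τk ≤ (K * (k : ℝ) ^ δ) * (K * (k : ℝ) ^ δ) :=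
      mul_le_mul hτK hτK hτ0 hkd0
    have h1 : τk * (τk * τk) ≤ (K * (k : ℝ) ^ δ) * ((K * (k : ℝ) ^ δ) * (K * (k : ℝ) ^ δ)) :=
      mul_le_mul hτK h12 (mul_nonneg hτ0 hτ0) hkd0
    have h3 : (k : ℝ) ^ δ * (k : ℝ) ^ δ * (k : ℝ) ^ δ = (k : ℝ) ^ (ε' - ε) := by
      rw [← Real.rpow_add hkpos, ← Real.rpow_add hkpos, hδdef]
      congr 1; ring
    calc τk * (τk * τk)
        ≤ (K * (k : ℝ) ^ δ) * ((K * (k : ℝ) ^ δ) * (K * (k : ℝ) ^ δ)) := h1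
      _ = K^3 * ((k : ℝ) ^ δ * (k : ℝ) ^ δ * (k : ℝ) ^ δ) := by ring
      _ = K^3 * (k : ℝ) ^ (ε' - ε) := by rw [h3]
  have hkle2 : (k : ℝ) ^ (ε' - ε) ≤ ((k * l * n : ℕ) : ℝ) ^ (ε' - ε) := by
    apply Real.rpow_le_rpow hkpos.le ?_ (by linarith)
    have hnat : k ≤ k * l * n :=
      le_trans (Nat.le_mul_of_pos_right k hl) (Nat.le_mul_of_pos_right (k*l) hn)
    exact_mod_cast hnat
  calc ‖A k l n‖ ≤ τk * (τk * (τk * T)) := hsum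
    _ = (τk * (τk * τk)) * T := by ring
    _ ≤ (K^3 * ((k * l * n : ℕ) : ℝ) ^ (ε' - ε)) * T := by
        apply mul_le_mul_of_nonneg_right _ hT0
        exact hτcube.trans (mul_le_mul_of_nonneg_left hkle2 (by positivity))
    _ = C^2 * K^3 * ((k * l * n : ℕ) : ℝ) ^ ((1:ℝ)/2 + ε') := by
        rw [hT, hs]
        have hmerge : ((k * l * n : ℕ) : ℝ) ^ (ε' - ε) * ((k * l * n : ℕ) : ℝ) ^ ((1:ℝ)/2 + ε)
            = ((k * l * n : ℕ) : ℝ) ^ ((1:ℝ)/2 + ε') := by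
          rw [← Real.rpow_add hklnpos]
          congr 1; ring
        calc K^3 * ((k * l * n : ℕ) : ℝ) ^ (ε' - ε) * (C^2 * ((k * l * n : ℕ) : ℝ) ^ ((1:ℝ)/2 + ε))
            = C^2 * K^3 * (((k * l * n : ℕ) : ℝ) ^ (ε' - ε) * ((k * l * n : ℕ) : ℝ) ^ ((1:ℝ)/2 + ε)) := by
              ring
          _ = C^2 * K^3 * ((k * l * n : ℕ) : ℝ) ^ ((1:ℝ)/2 + ε') := by rw [hmerge]
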